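/- arXiv:2310.03058 — 2 statements merged into one kernel-verified Lean document; each statement's English description precedes it below -/
import Mathlib

section
/- Let τ > 0, M ≥ 1, let p, q be reals with q > 0 and p > max(q, 1), and let φ : [−τ, 0] → ℝ be continuous with φ(0) ≥ M, φ(0) ≥ M^{1/p}·|φ(t)|^{q/p} for all t ∈ [−τ, 0], and φ(0) > M^{1/p}·|φ(−τ)|^{q/p}. Then any solution y of the delay differential equation y′(t) = |y(t)|^p − M·|y(t−τ)|^q for t > 0, with y(t) = φ(t) on [−τ, 0], blows up in finite time: the maximal interval of existence [0, T*) has T* < ∞ and y(t) → +∞ as t → T*⁻. -/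
open Set Filter

/-- `y` is a solution on `[0, b)` of the delay equation
`y′(t) = |y(t)|^p − M·|y(t−τ)|^q` with history `φ` on `[−τ, 0]`:
`y` is continuous on `[−τ, b)`, agrees with `φ` on `[−τ, 0]`, and is
differentiable on `(0, b)` with the prescribed derivative. -/
def DelaySolOn (τ M p q : ℝ) (φ y : ℝ → ℝ) (b : ℝ) : Prop :=
  ContinuousOn y (Set.Ico (-τ) b) ∧
  (∀ t ∈ Set.Icc (-τ) (0:ℝ), y t = φ t) ∧
  ∀ t ∈ Set.Ioo (0:ℝ) b, HasDerivAt y (|y t| ^ p - M * |y (t - τ)| ^ q) t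

/-- `y` is a global solution (on `[0, ∞)`) of the delay equation with history `φ`. -/
def DelaySolGlobal (τ M p q : ℝ) (φ y : ℝ → ℝ) : Prop :=
  ContinuousOn y (Set.Ici (-τ)) ∧
  (∀ t ∈ Set.Icc (-τ) (0:ℝ), y t = φ t) ∧
  ∀ t ∈ Set.Ioi (0:ℝ), HasDerivAt y (|y t| ^ p - M * |y (t - τ)| ^ q) t

/-!
Write `c = φ 0`. The hypotheses say `M |φ t|^q ≤ c^p` on `[-τ, 0]`, strictly at `-τ`, and
(at `t = 0`) `M ≤ c^(p-q)`. As long as `y` increases on `[0, t]` we have `y t > c`, and the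
delayed term `M |y (t - τ)|^q` stays below `y t ^ p`: for `t ≤ τ` by the bound on `φ`, for
`t > τ` because `M x^q ≤ x^p` once `x ≥ c`. So `y' > 0` cannot fail for a first time, and `y`
increases. For `t ≥ τ` this gives the Riccati inequality `y' ≥ (1 - (c / y τ)^(p-q)) y^p` with
`p > 1`, so no solution is global. On a maximal interval `[0, T*)` the increasing `y` has a
limit; were it finite, Picard–Lindelöf for `x' = |x|^p - M |y (t - τ)|^q`, whose delayed term
is already known on `[T*, T* + τ)`, would continue the solution past `T*`.
-/

open Topology Metric

lemma rpow_one_div_mul_rpow_div_rpow {M x p q : ℝ} (hM : 0 ≤ M) (hx : 0 ≤ x) (hp : p ≠ 0) :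
    (M ^ (1 / p) * x ^ (q / p)) ^ p = M * x ^ q := by
  rw [Real.mul_rpow (Real.rpow_nonneg hM _) (Real.rpow_nonneg hx _), ← Real.rpow_mul hM,
    ← Real.rpow_mul hx, one_div_mul_cancel hp, div_mul_cancel₀ q hp, Real.rpow_one]

lemma rpow_sub_mul_rpow_le {c d x p q : ℝ} (hc : 0 ≤ c) (hd : 0 < d) (hdx : d ≤ x)
    (hqp : q ≤ p) : c ^ (p - q) * x ^ q ≤ (c / d) ^ (p - q) * x ^ p := by
  have hx : 0 < x := hd.trans_le hdx
  calc c ^ (p - q) * x ^ q = (c / x) ^ (p - q) * x ^ p := by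
        rw [Real.div_rpow hc hx.le, div_mul_eq_mul_div, mul_div_assoc, ← Real.rpow_sub hx]
        ring_nf
    _ ≤ (c / d) ^ (p - q) * x ^ p := by gcongr

lemma ContinuousOn.forall_pos_of_forall_pos_before {D : ℝ → ℝ} {a b : ℝ}
    (hD : ContinuousOn D (Ico a b))
    (hstep : ∀ t ∈ Ico a b, (∀ s ∈ Ico a t, 0 < D s) → 0 < D t) :
    ∀ t ∈ Ico a b, 0 < D t := by
  by_contra! ⟨t₁, ht₁, hD₁⟩
  have hclosed : IsClosed (Icc a t₁ ∩ D ⁻¹' Iic 0) :=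
    (hD.mono (Icc_subset_Ico_right ht₁.2)).preimage_isClosed_of_isClosed isClosed_Icc isClosed_Iic
  obtain ⟨t₀, ⟨ht₀, hD₀⟩, hfirst⟩ := (isCompact_Icc.of_isClosed_subset hclosed
    inter_subset_left).exists_isLeast ⟨t₁, ⟨ht₁.1, le_rfl⟩, hD₁⟩
  refine (hstep t₀ ⟨ht₀.1, ht₀.2.trans_lt ht₁.2⟩ fun s hs ↦ ?_).not_ge hD₀
  by_contra! hDs
  exact hs.2.not_ge (hfirst ⟨⟨hs.1, hs.2.le.trans ht₀.2⟩, hDs⟩)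

lemma MonotoneOn.tendsto_nhdsLT_atTop_or_exists {α β : Type*} [LinearOrder α]
    [DenselyOrdered α] [TopologicalSpace α] [OrderTopology α]
    [ConditionallyCompleteLinearOrder β] [TopologicalSpace β] [OrderTopology β] {f : α → β}
    {a b : α} (hab : a < b) (hf : MonotoneOn f (Ioo a b)) :
    Tendsto f (𝓝[<] b) atTop ∨ ∃ L, Tendsto f (𝓝[<] b) (𝓝 L) := by
  by_cases hbdd : BddAbove (f '' Ioo a b)
  · exact Or.inr ⟨_, hf.tendsto_nhdsWithin_Ioo_left (nonempty_Ioo.2 hab) hbdd⟩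
  refine Or.inl (tendsto_atTop.2 fun K ↦ ?_)
  obtain ⟨_, ⟨s, hs, rfl⟩, hKs⟩ := not_bddAbove_iff.1 hbdd K
  filter_upwards [Ioo_mem_nhdsLT hs.2] with t ht
  exact hKs.le.trans (hf hs ⟨hs.1.trans ht.1, ht.2⟩ ht.1.le)

lemma riccati_lifespan_lt {y y' : ℝ → ℝ} {a b k p : ℝ} (hp : 1 < p) (hab : a ≤ b)
    (hcont : ContinuousOn y (Icc a b)) (hder : ∀ t ∈ Ioo a b, HasDerivAt y (y' t) t)
    (hpos : ∀ t ∈ Icc a b, 0 < y t) (hge : ∀ t ∈ Ioo a b, k * y t ^ p ≤ y' t) :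
    (p - 1) * k * (b - a) < y a ^ (1 - p) := by
  set u : ℝ → ℝ := fun t ↦ y t ^ (1 - p) + (p - 1) * k * t
  set u' : ℝ → ℝ := fun t ↦ (1 - p) * y t ^ (1 - p - 1) * y' t + (p - 1) * k
  have hu : ∀ t ∈ Ioo a b, HasDerivAt u (u' t) t := fun t ht ↦
    (((hder t ht).rpow_const (Or.inl (hpos t (Ioo_subset_Icc_self ht)).ne')).add
      ((hasDerivAt_id t).const_mul _)).congr_deriv (by simp only [u']; ring)
  have hu' : ∀ t ∈ Ioo a b, u' t ≤ 0 := fun t ht ↦ by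
    have hyt := hpos t (Ioo_subset_Icc_self ht)
    have hcancel : y t ^ (1 - p - 1) * y t ^ p = 1 := by rw [← Real.rpow_add hyt]; simp
    have := mul_le_mul_of_nonpos_left (hge t ht)
      (mul_nonpos_of_nonpos_of_nonneg (by linarith : 1 - p ≤ 0)
        (Real.rpow_nonneg hyt.le (1 - p - 1)))
    linear_combination this + (1 - p) * k * hcancel
  have hanti : AntitoneOn u (Icc a b) :=
    antitoneOn_of_hasDerivWithinAt_nonpos (convex_Icc a b)
      ((hcont.rpow_const fun t ht ↦ Or.inl (hpos t ht).ne').add (by fun_prop))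
      (by simpa using fun t ht ↦ (hu t ht).hasDerivWithinAt) (by simpa using hu')
  have hub := hanti ⟨le_rfl, hab⟩ ⟨hab, le_rfl⟩ hab
  have := Real.rpow_pos_of_pos (hpos b ⟨hab, le_rfl⟩) (1 - p)
  simp only [u] at hub
  nlinarith

lemma exists_hasDerivWithinAt_sub_of_contDiffAt {F g : ℝ → ℝ} {x₀ t₀ t₁ : ℝ}
    (ht : t₀ < t₁) (hF : ContDiffAt ℝ 1 F x₀) (hg : ContinuousOn g (Icc t₀ t₁)) :
    ∃ b ∈ Ioc t₀ t₁, ∃ f : ℝ → ℝ, f t₀ = x₀ ∧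
      ∀ t ∈ Icc t₀ b, HasDerivWithinAt f (F (f t) - g t) (Icc t₀ b) t := by
  obtain ⟨K, s, hs, hK⟩ := hF.exists_lipschitzOnWith
  obtain ⟨a, ha, has⟩ := Metric.mem_nhds_iff.mp hs
  obtain ⟨B, hB⟩ := isCompact_Icc.exists_bound_of_continuousOn hg
  have hB₀ : 0 ≤ B := (norm_nonneg _).trans (hB t₀ ⟨le_rfl, ht.le⟩)
  set r : NNReal := ⟨a / 2, by positivity⟩
  have hr : (r : ℝ) = a / 2 := rfl
  have hKr : LipschitzOnWith K F (closedBall x₀ r) :=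
    hK.mono ((closedBall_subset_ball (by rw [hr]; linarith)).trans has)
  set C : NNReal := ⟨‖F x₀‖ + K * r + B, by positivity⟩
  have hC : (C : ℝ) = ‖F x₀‖ + K * r + B := rfl
  set ε := min (t₁ - t₀) (r / (C + 1))
  have hε : 0 < ε := lt_min (sub_pos.2 ht) (div_pos (by rw [hr]; linarith) (by positivity))
  have hεt : t₀ + ε ≤ t₁ := by linarith [min_le_left (t₁ - t₀) (r / (C + 1))]
  have hpl : IsPicardLindelof (fun t x ↦ F x - g t) (tmin := t₀) (tmax := t₀ + ε)
      ⟨t₀, le_rfl, by linarith⟩ x₀ r 0 C K := by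
    refine ⟨fun t _ ↦ ?_, fun x _ ↦ ?_, fun t ht x hx ↦ ?_, ?_⟩
    · exact LipschitzOnWith.of_dist_le_mul fun x hx y hy ↦ by
        rw [dist_sub_right]; exact hKr.dist_le_mul x hx y hy
    · exact continuousOn_const.sub (hg.mono (Icc_subset_Icc_right hεt))
    · have hFx : ‖F x - F x₀‖ ≤ K * r :=
        (hKr.norm_sub_le hx (mem_closedBall_self r.2)).trans
          (by gcongr; exact mem_closedBall_iff_norm.1 hx)
      calc ‖F x - g t‖ ≤ ‖F x - F x₀‖ + ‖F x₀‖ + ‖g t‖ :=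
            (norm_sub_le _ _).trans (by gcongr; exact norm_le_norm_sub_add _ _)
        _ ≤ C := by rw [hC]; linarith [hB t ⟨ht.1, ht.2.trans hεt⟩]
    · have : (C : ℝ) * ε ≤ r :=
        calc (C : ℝ) * ε ≤ C * (r / (C + 1)) := by gcongr; exact min_le_right _ _
          _ ≤ (C + 1) * (r / (C + 1)) := by gcongr; linarith
          _ = r := by field_simp
      simpa [hε.le] using this
  obtain ⟨f, hf₀, hf⟩ := hpl.exists_eq_forall_mem_Icc_hasDerivWithinAt₀
  exact ⟨t₀ + ε, ⟨by linarith, hεt⟩, f, hf₀, hf⟩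

lemma hasDerivAt_ite_of_tendsto {y y' f : ℝ → ℝ} {a T b e : ℝ} (haT : a < T) (hTb : T < b)
    (hy : ∀ t ∈ Ioo a T, HasDerivAt y (y' t) t) (hy' : Tendsto y' (𝓝[<] T) (𝓝 e))
    (hyf : Tendsto y (𝓝[<] T) (𝓝 (f T))) (hf : HasDerivWithinAt f e (Icc T b) T) :
    HasDerivAt (fun t ↦ if t < T then y t else f t) e T := by
  set z : ℝ → ℝ := fun t ↦ if t < T then y t else f t
  have hzy : EqOn z y (Ioo a T) := fun t ht ↦ if_pos ht.2
  have hzT : z T = f T := if_neg (lt_irrefl T)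
  have hz : ∀ t ∈ Ioo a T, HasDerivAt z (y' t) t := fun t ht ↦
    (hy t ht).congr_of_eventuallyEq (eventuallyEq_of_mem (Ioo_mem_nhds ht.1 ht.2) hzy)
  have hright : HasDerivWithinAt z e (Ici T) T :=
    (hf.mono_of_mem_nhdsWithin (Icc_mem_nhdsGE hTb)).congr
      (fun t ht ↦ if_neg (not_lt.2 ht)) hzT
  have hleft : HasDerivWithinAt z e (Iic T) T := by
    refine hasDerivWithinAt_Iic_of_tendsto_deriv (s := Ioo a T)
      (fun t ht ↦ (hz t ht).differentiableAt.differentiableWithinAt) ?_ (Ioo_mem_nhdsLT haT) ?_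
    · rw [ContinuousWithinAt, hzT]
      exact (hyf.mono_left (nhdsWithin_mono _ Ioo_subset_Iio_self)).congr'
        (eventually_nhdsWithin_of_forall fun t ht ↦ (hzy ht).symm)
    · refine hy'.congr' ?_
      filter_upwards [Ioo_mem_nhdsLT haT] with t ht
      exact (hz t ht).deriv.symm
  simpa using hleft.union hright

structure DelayHistoryBound (τ M p q : ℝ) (φ : ℝ → ℝ) : Prop where
  pos : 0 < φ 0
  le : ∀ t ∈ Icc (-τ) 0, M * |φ t| ^ q ≤ φ 0 ^ p
  lt : M * |φ (-τ)| ^ q < φ 0 ^ p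

namespace DelayHistoryBound

variable {τ M p q : ℝ} {φ : ℝ → ℝ}

lemma of_root_le (hM : 0 ≤ M) (hp : 0 < p)
    (hle : ∀ t ∈ Icc (-τ) 0, M ^ (1 / p) * |φ t| ^ (q / p) ≤ φ 0)
    (hlt : M ^ (1 / p) * |φ (-τ)| ^ (q / p) < φ 0) : DelayHistoryBound τ M p q φ := by
  have hroot : ∀ t, 0 ≤ M ^ (1 / p) * |φ t| ^ (q / p) := fun t ↦ by positivity
  refine ⟨(hroot _).trans_lt hlt, fun t ht ↦ ?_, ?_⟩
  · rw [← rpow_one_div_mul_rpow_div_rpow hM (abs_nonneg _) hp.ne']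
    exact Real.rpow_le_rpow (hroot t) (hle t ht) hp.le
  · rw [← rpow_one_div_mul_rpow_div_rpow hM (abs_nonneg _) hp.ne']
    exact Real.rpow_lt_rpow (hroot _) hlt hp

lemma le_rpow_sub (h : DelayHistoryBound τ M p q φ) (hτ : 0 ≤ τ) : M ≤ φ 0 ^ (p - q) := by
  have := h.le 0 ⟨by linarith, le_rfl⟩
  rw [abs_of_pos h.pos] at this
  rwa [Real.rpow_sub h.pos, le_div_iff₀ (Real.rpow_pos_of_pos h.pos q)]

end DelayHistoryBound

namespace DelaySolOn

variable {τ M p q T b : ℝ} {φ y f : ℝ → ℝ}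

lemma apply_zero (hy : DelaySolOn τ M p q φ y b) (hτ : 0 ≤ τ) : y 0 = φ 0 :=
  hy.2.1 0 ⟨by linarith, le_rfl⟩

lemma continuousOn_rhs (hy : DelaySolOn τ M p q φ y b) (hτ : 0 ≤ τ) (hp : 0 ≤ p)
    (hq : 0 ≤ q) : ContinuousOn (fun t ↦ |y t| ^ p - M * |y (t - τ)| ^ q) (Ico 0 b) := by
  have hy₀ : ContinuousOn y (Ico 0 b) := hy.1.mono fun t ht ↦ ⟨by linarith [ht.1], ht.2⟩
  have hshift : ContinuousOn (fun t ↦ y (t - τ)) (Ico 0 b) :=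
    hy.1.comp (by fun_prop) fun t ht ↦ ⟨by linarith [ht.1], by linarith [ht.2]⟩
  exact (hy₀.abs.rpow_const fun _ _ ↦ Or.inr hp).sub
    (continuousOn_const.mul (hshift.abs.rpow_const fun _ _ ↦ Or.inr hq))

lemma strictMonoOn_of_rhs_pos (hy : DelaySolOn τ M p q φ y b) (hτ : 0 ≤ τ) {s : Set ℝ}
    (hs : Convex ℝ s) (hsb : s ⊆ Ico 0 b)
    (hpos : ∀ t ∈ interior s, 0 < |y t| ^ p - M * |y (t - τ)| ^ q) : StrictMonoOn y s := by
  have hint : interior s ⊆ Ioo 0 b := by simpa using interior_mono hsb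
  exact strictMonoOn_of_hasDerivWithinAt_pos hs
    (hy.1.mono fun t ht ↦ ⟨by linarith [(hsb ht).1], (hsb ht).2⟩)
    (fun t ht ↦ (hy.2.2 t (hint ht)).hasDerivWithinAt) hpos

lemma rhs_pos (hy : DelaySolOn τ M p q φ y b) (hφ : DelayHistoryBound τ M p q φ)
    (hτ : 0 < τ) (hp : 0 < p) (hq : 0 ≤ q) (hqp : q ≤ p) :
    ∀ t ∈ Ico 0 b, 0 < |y t| ^ p - M * |y (t - τ)| ^ q := by
  refine (hy.continuousOn_rhs hτ.le hp.le hq).forall_pos_of_forall_pos_before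
    fun t ht hbefore ↦ ?_
  have hy₀ := hy.apply_zero hτ.le
  rcases ht.1.eq_or_lt with rfl | ht₀
  · rw [hy₀, zero_sub, hy.2.1 _ ⟨le_rfl, by linarith⟩, abs_of_pos hφ.pos]
    linarith [hφ.lt]
  have hmono : StrictMonoOn y (Icc 0 t) :=
    hy.strictMonoOn_of_rhs_pos hτ.le (convex_Icc 0 t) (Icc_subset_Ico_right ht.2)
      (by rw [interior_Icc]; exact fun s hs ↦ hbefore s ⟨hs.1.le, hs.2⟩)
  have hyt : φ 0 < y t := hy₀ ▸ hmono ⟨le_rfl, ht₀.le⟩ ⟨ht₀.le, le_rfl⟩ ht₀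
  have hpow : φ 0 ^ p < y t ^ p := Real.rpow_lt_rpow hφ.pos.le hyt hp
  rw [abs_of_pos (hφ.pos.trans hyt), sub_pos]
  rcases le_or_gt (t - τ) 0 with hs | hs
  · rw [hy.2.1 _ ⟨by linarith, hs⟩]
    exact (hφ.le _ ⟨by linarith, hs⟩).trans_lt hpow
  have hys : φ 0 < y (t - τ) := hy₀ ▸ hmono ⟨le_rfl, ht₀.le⟩ ⟨hs.le, by linarith⟩ hs
  have hyst : y (t - τ) < y t :=
    hmono ⟨hs.le, by linarith⟩ ⟨ht₀.le, le_rfl⟩ (by linarith)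
  rw [abs_of_pos (hφ.pos.trans hys)]
  calc M * y (t - τ) ^ q ≤ φ 0 ^ (p - q) * y (t - τ) ^ q :=
        mul_le_mul_of_nonneg_right (hφ.le_rpow_sub hτ.le)
          (Real.rpow_nonneg (hφ.pos.trans hys).le q)
    _ ≤ (φ 0 / φ 0) ^ (p - q) * y (t - τ) ^ p :=
        rpow_sub_mul_rpow_le hφ.pos.le hφ.pos hys.le hqp
    _ = y (t - τ) ^ p := by rw [div_self hφ.pos.ne', Real.one_rpow, one_mul]
    _ < y t ^ p := Real.rpow_lt_rpow (hφ.pos.trans hys).le hyst hp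

lemma strictMonoOn (hy : DelaySolOn τ M p q φ y b) (hφ : DelayHistoryBound τ M p q φ)
    (hτ : 0 < τ) (hp : 0 < p) (hq : 0 ≤ q) (hqp : q ≤ p) : StrictMonoOn y (Ico 0 b) :=
  hy.strictMonoOn_of_rhs_pos hτ.le (convex_Ico 0 b) subset_rfl fun t ht ↦
    hy.rhs_pos hφ hτ hp hq hqp t (interior_subset ht)

lemma le_apply (hy : DelaySolOn τ M p q φ y b) (hφ : DelayHistoryBound τ M p q φ)
    (hτ : 0 < τ) (hp : 0 < p) (hq : 0 ≤ q) (hqp : q ≤ p) {t : ℝ} (ht : t ∈ Ico 0 b) :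
    φ 0 ≤ y t :=
  hy.apply_zero hτ.le ▸
    (hy.strictMonoOn hφ hτ hp hq hqp).monotoneOn ⟨le_rfl, ht.1.trans_lt ht.2⟩ ht ht.1

lemma continuousAt_comp_sub (hy : DelaySolOn τ M p q φ y T) {t : ℝ}
    (ht : t ∈ Ioo 0 (T + τ)) : ContinuousAt (fun s ↦ y (s - τ)) t :=
  (hy.1.continuousAt (mem_of_superset (Ioo_mem_nhds (by linarith [ht.1]) (by linarith [ht.2]))
    Ioo_subset_Ico_self)).comp (by fun_prop)

lemma ite (hy : DelaySolOn τ M p q φ y T) (hτ : 0 < τ) (hq : 0 ≤ q) (hT : 0 < T) (hTb : T < b)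
    (hbτ : b ≤ T + τ) (hlim : Tendsto y (𝓝[<] T) (𝓝 (f T))) (hfT : f T ≠ 0)
    (hf : ∀ t ∈ Icc T b, HasDerivWithinAt f (|f t| ^ p - M * |y (t - τ)| ^ q) (Icc T b) t) :
    DelaySolOn τ M p q φ (fun t ↦ if t < T then y t else f t) b := by
  set z : ℝ → ℝ := fun t ↦ if t < T then y t else f t
  have hzy {t : ℝ} (ht : t < T) : z t = y t := if_pos ht
  have hzf {t : ℝ} (ht : T ≤ t) : z t = f t := if_neg (not_lt.2 ht)
  have hder : ∀ t ∈ Ioo 0 b, HasDerivAt z (|z t| ^ p - M * |z (t - τ)| ^ q) t := by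
    intro t ht
    rw [hzy (by linarith [ht.2] : t - τ < T)]
    rcases lt_trichotomy t T with htT | rfl | htT
    · rw [hzy htT]
      exact (hy.2.2 t ⟨ht.1, htT⟩).congr_of_eventuallyEq
        (eventuallyEq_of_mem (Iio_mem_nhds htT) fun s hs ↦ hzy hs)
    · rw [hzf le_rfl]
      refine hasDerivAt_ite_of_tendsto hT hTb hy.2.2 ?_ hlim (hf t ⟨le_rfl, hTb.le⟩)
      exact (hlim.abs.rpow_const (Or.inl (abs_ne_zero.2 hfT))).sub
        (((hy.continuousAt_comp_sub ⟨hT, by linarith⟩).abs.rpow_const (Or.inr hq)).const_mul M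
          |>.tendsto.mono_left nhdsWithin_le_nhds)
    · rw [hzf htT.le]
      exact ((hf t ⟨htT.le, ht.2.le⟩).hasDerivAt (Icc_mem_nhds htT ht.2)).congr_of_eventuallyEq
        (eventuallyEq_of_mem (Ioi_mem_nhds htT) fun s hs ↦ hzf (le_of_lt hs))
  refine ⟨fun t ht ↦ ?_, fun t ht ↦ (hzy (by linarith [ht.2])).trans (hy.2.1 t ht), hder⟩
  rcases lt_or_ge 0 t with ht₀ | ht₀
  · exact (hder t ⟨ht₀, ht.2⟩).continuousAt.continuousWithinAt
  · have hyz : ContinuousWithinAt z (Ico (-τ) T) t :=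
      (hy.1 t ⟨ht.1, by linarith⟩).congr (fun s hs ↦ hzy hs.2) (hzy (by linarith))
    exact hyz.mono_of_mem_nhdsWithin
      (mem_nhdsWithin.2 ⟨Iio T, isOpen_Iio, by simp only [mem_Iio]; linarith,
        fun s hs ↦ ⟨hs.2.1, hs.1⟩⟩)

lemma exists_extension (hy : DelaySolOn τ M p q φ y T) (hτ : 0 < τ) (hq : 0 ≤ q) (hT : 0 < T)
    {L : ℝ} (hL : L ≠ 0) (hlim : Tendsto y (𝓝[<] T) (𝓝 L)) :
    ∃ b, T < b ∧ ∃ z, DelaySolOn τ M p q φ z b ∧ ∀ t ∈ Ico (-τ) T, z t = y t := by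
  have hF : ContDiffAt ℝ 1 (fun x : ℝ ↦ |x| ^ p) L :=
    (contDiffAt_abs hL).rpow_const_of_ne (abs_ne_zero.2 hL)
  have hg : ContinuousOn (fun t ↦ M * |y (t - τ)| ^ q) (Icc T (T + τ / 2)) := fun t ht ↦
    (((hy.continuousAt_comp_sub ⟨by linarith [ht.1], by linarith [ht.2]⟩).abs.rpow_const
      (Or.inr hq)).const_mul M).continuousWithinAt
  obtain ⟨b, hb, f, hf₀, hf⟩ :=
    exists_hasDerivWithinAt_sub_of_contDiffAt (by linarith : T < T + τ / 2) hF hg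
  exact ⟨b, hb.1, _,
    hy.ite hτ hq hT hb.1 (by linarith [hb.2]) (hf₀ ▸ hlim) (hf₀ ▸ hL) hf,
    fun t ht ↦ if_pos ht.2⟩

lemma tendsto_atTop_of_not_exists_extension (hy : DelaySolOn τ M p q φ y T)
    (hφ : DelayHistoryBound τ M p q φ) (hτ : 0 < τ) (hp : 0 < p) (hq : 0 ≤ q) (hqp : q ≤ p)
    (hT : 0 < T) (hmax : ¬ ∃ b, T < b ∧ ∃ z, DelaySolOn τ M p q φ z b ∧
      ∀ t ∈ Ico (-τ) T, z t = y t) :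
    Tendsto y (𝓝[<] T) atTop := by
  refine ((hy.strictMonoOn hφ hτ hp hq hqp).monotoneOn.mono Ioo_subset_Ico_self
    |>.tendsto_nhdsLT_atTop_or_exists hT).resolve_right fun ⟨L, hL⟩ ↦ hmax ?_
  have hφL : φ 0 ≤ L := ge_of_tendsto hL <| by
    filter_upwards [Ioo_mem_nhdsLT hT] with t ht
    exact hy.le_apply hφ hτ hp hq hqp ⟨ht.1.le, ht.2⟩
  exact hy.exists_extension hτ hq hT (hφ.pos.trans_le hφL).ne' hL

end DelaySolOn

namespace DelaySolGlobal

variable {τ M p q : ℝ} {φ y : ℝ → ℝ}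

lemma delaySolOn (hy : DelaySolGlobal τ M p q φ y) (b : ℝ) : DelaySolOn τ M p q φ y b :=
  ⟨hy.1.mono fun _ ht ↦ ht.1, hy.2.1, fun t ht ↦ hy.2.2 t ht.1⟩

lemma strictMonoOn (hy : DelaySolGlobal τ M p q φ y) (hφ : DelayHistoryBound τ M p q φ)
    (hτ : 0 < τ) (hp : 0 < p) (hq : 0 ≤ q) (hqp : q ≤ p) : StrictMonoOn y (Ici 0) :=
  fun s hs t ht hst ↦ (hy.delaySolOn (t + 1)).strictMonoOn hφ hτ hp hq hqp
    ⟨hs, by linarith⟩ ⟨ht, by linarith⟩ hst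

lemma le_rhs (hy : DelaySolGlobal τ M p q φ y) (hφ : DelayHistoryBound τ M p q φ)
    (hτ : 0 < τ) (hM : 0 ≤ M) (hq : 0 ≤ q) (hqp : q < p) {t : ℝ} (ht : τ ≤ t) :
    (1 - (φ 0 / y τ) ^ (p - q)) * y t ^ p ≤ |y t| ^ p - M * |y (t - τ)| ^ q := by
  have hmono := (hy.strictMonoOn hφ hτ (hq.trans_lt hqp) hq hqp.le).monotoneOn
  have hys : φ 0 ≤ y (t - τ) := (hy.delaySolOn t).le_apply hφ hτ (hq.trans_lt hqp) hq hqp.le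
    ⟨by linarith, by linarith⟩
  have hyτ : φ 0 ≤ y τ :=
    (hy.delaySolOn (τ + 1)).le_apply hφ hτ (hq.trans_lt hqp) hq hqp.le ⟨hτ.le, by linarith⟩
  have hyt : y τ ≤ y t := hmono hτ.le (mem_Ici.2 (by linarith)) ht
  have hyτ₀ : 0 < y τ := hφ.pos.trans_le hyτ
  rw [abs_of_pos (hyτ₀.trans_le hyt), abs_of_pos (hφ.pos.trans_le hys)]
  have : M * y (t - τ) ^ q ≤ (φ 0 / y τ) ^ (p - q) * y t ^ p :=
    calc M * y (t - τ) ^ q ≤ M * y t ^ q := by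
          gcongr
          · linarith [hφ.pos]
          · exact hmono (mem_Ici.2 (by linarith)) (mem_Ici.2 (by linarith)) (by linarith)
      _ ≤ φ 0 ^ (p - q) * y t ^ q :=
          mul_le_mul_of_nonneg_right (hφ.le_rpow_sub hτ.le)
            (Real.rpow_nonneg (hyτ₀.trans_le hyt).le q)
      _ ≤ (φ 0 / y τ) ^ (p - q) * y t ^ p := rpow_sub_mul_rpow_le hφ.pos.le hyτ₀ hyt hqp.le
  linarith

end DelaySolGlobal

lemma not_delaySolGlobal {τ M p q : ℝ} {φ y : ℝ → ℝ} (hφ : DelayHistoryBound τ M p q φ)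
    (hτ : 0 < τ) (hM : 0 ≤ M) (hq : 0 ≤ q) (hqp : q < p) (hp : 1 < p) :
    ¬ DelaySolGlobal τ M p q φ y := by
  intro hy
  have hmono := hy.strictMonoOn hφ hτ (by linarith) hq hqp.le
  have hyτ : φ 0 < y τ := (hy.delaySolOn 0).apply_zero hτ.le ▸ hmono self_mem_Ici hτ.le hτ
  have hyτ₀ : 0 < y τ := hφ.pos.trans hyτ
  set k := 1 - (φ 0 / y τ) ^ (p - q)
  have hk : 0 < (p - 1) * k := mul_pos (sub_pos.2 hp) <| sub_pos.2 <| Real.rpow_lt_one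
    (div_nonneg hφ.pos.le hyτ₀.le) ((div_lt_one hyτ₀).2 hyτ) (sub_pos.2 hqp)
  set b := τ + y τ ^ (1 - p) / ((p - 1) * k)
  have hb : τ ≤ b := le_add_of_nonneg_right (by positivity)
  have hlifespan : (p - 1) * k * (b - τ) < y τ ^ (1 - p) := riccati_lifespan_lt hp hb
    (hy.1.mono fun t ht ↦ mem_Ici.2 (by linarith [ht.1]))
    (fun t ht ↦ hy.2.2 t (mem_Ioi.2 (by linarith [ht.1])))
    (fun t ht ↦ hyτ₀.trans_le (hmono.monotoneOn hτ.le (mem_Ici.2 (by linarith [ht.1])) ht.1))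
    (fun t ht ↦ hy.le_rhs hφ hτ hM hq hqp ht.1.le)
  rw [add_sub_cancel_left, mul_div_cancel₀ _ hk.ne'] at hlifespan
  exact lt_irrefl _ hlifespan

theorem delay_eq_blowup_M_general (τ M p q : ℝ) (hτ : 0 < τ) (hM : 1 ≤ M)
    (hq : 0 < q) (hp : max q 1 < p)
    (φ : ℝ → ℝ)
    (hφ : ∀ t ∈ Set.Icc (-τ) (0:ℝ), M ^ (1 / p) * |φ t| ^ (q / p) ≤ φ 0)
    (hφτ : M ^ (1 / p) * |φ (-τ)| ^ (q / p) < φ 0) :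
    (¬ ∃ y : ℝ → ℝ, DelaySolGlobal τ M p q φ y) ∧
    ∀ (Tstar : ℝ) (y : ℝ → ℝ), 0 < Tstar →
      DelaySolOn τ M p q φ y Tstar →
      (¬ ∃ b : ℝ, Tstar < b ∧ ∃ z : ℝ → ℝ, DelaySolOn τ M p q φ z b ∧
          ∀ t ∈ Set.Ico (-τ) Tstar, z t = y t) →
      Filter.Tendsto y (nhdsWithin Tstar (Set.Iio Tstar)) Filter.atTop := by
  have hp₁ : 1 < p := (le_max_right q 1).trans_lt hp
  have hqp : q < p := (le_max_left q 1).trans_lt hp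
  have hhist : DelayHistoryBound τ M p q φ := .of_root_le (by linarith) (by linarith) hφ hφτ
  exact ⟨fun ⟨y, hy⟩ ↦ not_delaySolGlobal hhist hτ (by linarith) hq.le hqp hp₁ hy,
    fun _ _ hT hy hmax ↦ hy.tendsto_atTop_of_not_exists_extension hhist hτ (by linarith) hq.le
      hqp.le hT hmax⟩

/-- let `τ > 0`, `M ≥ 1`, `q > 0`, `p > max(q,1)`, and let `φ` be
a continuous history with `φ(0) ≥ M`, `φ(0) ≥ M^{1/p}·|φ(t)|^{q/p}` on
`[−τ, 0]` and `φ(0) > M^{1/p}·|φ(−τ)|^{q/p}`. Then any solution of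
`y′(t) = |y(t)|^p − M·|y(t−τ)|^q` with history `φ` blows up in finite time:
there is no global solution, and on the maximal interval of existence
`[0, T*)` one has `T* < ∞` and `y(t) → +∞` as `t → T*⁻`. -/
theorem delay_eq_blowup_M (τ M p q : ℝ) (hτ : 0 < τ) (hM : 1 ≤ M)
    (hq : 0 < q) (hp : max q 1 < p)
    (φ : ℝ → ℝ) (hφcont : ContinuousOn φ (Set.Icc (-τ) 0))
    (hφ0 : M ≤ φ 0)
    (hφ : ∀ t ∈ Set.Icc (-τ) (0:ℝ), M ^ (1 / p) * |φ t| ^ (q / p) ≤ φ 0)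
    (hφτ : M ^ (1 / p) * |φ (-τ)| ^ (q / p) < φ 0) :
    (¬ ∃ y : ℝ → ℝ, DelaySolGlobal τ M p q φ y) ∧
    ∀ (Tstar : ℝ) (y : ℝ → ℝ), 0 < Tstar →
      DelaySolOn τ M p q φ y Tstar →
      (¬ ∃ b : ℝ, Tstar < b ∧ ∃ z : ℝ → ℝ, DelaySolOn τ M p q φ z b ∧
          ∀ t ∈ Set.Ico (-τ) Tstar, z t = y t) →
      Filter.Tendsto y (nhdsWithin Tstar (Set.Iio Tstar)) Filter.atTop :=
  delay_eq_blowup_M_general τ M p q hτ hM hq hp φ hφ hφτ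
end

section
/- Let τ > 0, M ≥ 1, let p, q be reals with q > 0 and p > max(q, 1), and let φ : [−τ, 0] → ℝ be continuous with φ(0) ≥ M, φ(0) ≥ M^{1/p}·|φ(t)|^{q/p} for all t ∈ [−τ, 0], and φ(0) > M^{1/p}·|φ(−τ)|^{q/p}. If y is a solution on [0, T*) of the delay equation y′(t) = |y(t)|^p − M·|y(t−τ)|^q with history φ, then y′(t) > 0 for all t ∈ (0, T*); in particular y is strictly increasing on [0, T*). -/
open Set Filter Topology

/-- under the hypotheses of the delayed blow-up theorem, any
solution `y` on `[0, T*)` of `y′(t) = |y(t)|^p − M·|y(t−τ)|^q` with history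
`φ` satisfies `y′(t) > 0` for all `t ∈ (0, T*)`; in particular `y` is strictly
increasing on `[0, T*)`. -/
theorem delay_eq_increasing (τ M p q : ℝ) (hτ : 0 < τ) (hM : 1 ≤ M)
    (hq : 0 < q) (hp : max q 1 < p)
    (φ : ℝ → ℝ) (hφcont : ContinuousOn φ (Set.Icc (-τ) 0))
    (hφ0 : M ≤ φ 0)
    (hφ : ∀ t ∈ Set.Icc (-τ) (0:ℝ), M ^ (1 / p) * |φ t| ^ (q / p) ≤ φ 0)
    (hφτ : M ^ (1 / p) * |φ (-τ)| ^ (q / p) < φ 0)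
    (Tstar : ℝ) (y : ℝ → ℝ) (hTpos : 0 < Tstar)
    (hsol : DelaySolOn τ M p q φ y Tstar) :
    (∀ t ∈ Set.Ioo (0:ℝ) Tstar, 0 < deriv y t) ∧
    StrictMonoOn y (Set.Ico 0 Tstar) := by
  obtain ⟨hycont, hic, hode⟩ := hsol
  have hp1 : 1 < p := lt_of_le_of_lt (le_max_right q 1) hp
  have hqp : q < p := lt_of_le_of_lt (le_max_left q 1) hp
  have hppos : 0 < p := by linarith
  have hMpos : (0:ℝ) < M := by linarith
  have hφ0pos : (0:ℝ) < φ 0 := by linarith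
  have h0mem : (0:ℝ) ∈ Icc (-τ) (0:ℝ) := ⟨by linarith, le_refl 0⟩
  have hy0 : y 0 = φ 0 := hic 0 h0mem
  -- algebraic helper
  have key : ∀ a : ℝ, 0 ≤ a → (M ^ (1/p) * a ^ (q/p)) ^ p = M * a ^ q := by
    intro a ha
    rw [Real.mul_rpow (Real.rpow_nonneg hMpos.le _) (Real.rpow_nonneg ha _),
        ← Real.rpow_mul hMpos.le, ← Real.rpow_mul ha,
        one_div_mul_cancel hppos.ne', div_mul_cancel₀ q hppos.ne', Real.rpow_one]
  have hA : ∀ s ∈ Icc (-τ) (0:ℝ), M * |φ s| ^ q ≤ φ 0 ^ p := by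
    intro s hs
    have h2 : (M ^ (1/p) * |φ s| ^ (q/p)) ^ p ≤ φ 0 ^ p :=
      Real.rpow_le_rpow
        (mul_nonneg (Real.rpow_nonneg hMpos.le _) (Real.rpow_nonneg (abs_nonneg _) _))
        (hφ s hs) hppos.le
    rwa [key _ (abs_nonneg _)] at h2
  have hAτ : M * |φ (-τ)| ^ q < φ 0 ^ p := by
    have h2 : (M ^ (1/p) * |φ (-τ)| ^ (q/p)) ^ p < φ 0 ^ p :=
      Real.rpow_lt_rpow
        (mul_nonneg (Real.rpow_nonneg hMpos.le _) (Real.rpow_nonneg (abs_nonneg _) _))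
        hφτ hppos
    rwa [key _ (abs_nonneg _)] at h2
  -- M ≤ (φ 0) ^ (p - q)
  have hMle : M ≤ φ 0 ^ (p - q) := by
    have h := hA 0 h0mem
    rw [abs_of_pos hφ0pos] at h
    have hq0 : (0:ℝ) < φ 0 ^ q := Real.rpow_pos_of_pos hφ0pos q
    have hsplit : φ 0 ^ p = φ 0 ^ (p - q) * φ 0 ^ q := by
      rw [← Real.rpow_add hφ0pos]; ring_nf
    rw [hsplit] at h
    exact le_of_mul_le_mul_right h hq0
  -- continuity of the right-hand side
  have hsub : Ico (0:ℝ) Tstar ⊆ Ico (-τ) Tstar := Ico_subset_Ico (by linarith) le_rfl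
  have hFcont : ContinuousOn (fun t => |y t| ^ p - M * |y (t - τ)| ^ q) (Ico 0 Tstar) := by
    have h1 : ContinuousOn (fun t => |y t| ^ p) (Ico 0 Tstar) :=
      ((hycont.mono hsub).abs).rpow_const (fun x _ => Or.inr hppos.le)
    have h2 : ContinuousOn (fun t => y (t - τ)) (Ico 0 Tstar) := by
      apply hycont.comp (continuous_sub_right τ).continuousOn
      intro t ht
      have h : t - τ ∈ Ico (-τ) Tstar := ⟨by linarith [ht.1], by linarith [ht.2]⟩
      simpa using h
    exact h1.sub (continuousOn_const.mul ((h2.abs).rpow_const (fun x _ => Or.inr hq.le)))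
  have hmτ : (-τ) ∈ Icc (-τ) (0:ℝ) := ⟨le_rfl, by linarith⟩
  have hyτ : y (-τ) = φ (-τ) := hic _ hmτ
  have hF0 : 0 < |y 0| ^ p - M * |y (0 - τ)| ^ q := by
    rw [show (0:ℝ) - τ = -τ by ring, hyτ, hy0, abs_of_pos hφ0pos]
    linarith
  -- the main claim
  have hFpos : ∀ t ∈ Ioo (0:ℝ) Tstar, 0 < |y t| ^ p - M * |y (t - τ)| ^ q := by
    by_contra hcon
    push_neg at hcon
    obtain ⟨t₁, ht₁, hFt₁⟩ := hcon
    -- F is positive near 0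
    have hc0 : ContinuousWithinAt (fun t => |y t| ^ p - M * |y (t - τ)| ^ q)
        (Ico 0 Tstar) 0 := hFcont 0 ⟨le_rfl, hTpos⟩
    have hev : ∀ᶠ t in 𝓝[Ico 0 Tstar] (0:ℝ),
        0 < |y t| ^ p - M * |y (t - τ)| ^ q := hc0.eventually (eventually_gt_nhds hF0)
    rw [Filter.Eventually, Metric.mem_nhdsWithin_iff] at hev
    obtain ⟨ε, hε, hevball⟩ := hev
    set a : ℝ := min (ε/2) (t₁/2) with ha_def
    have ha_pos : 0 < a := lt_min (by linarith) (by linarith [ht₁.1])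
    have ha_lt_t₁ : a < t₁ := lt_of_le_of_lt (min_le_right _ _) (by linarith [ht₁.1])
    have hsmall : ∀ t ∈ Icc (0:ℝ) a, 0 < |y t| ^ p - M * |y (t - τ)| ^ q := by
      intro t ht
      have h1 : t ≤ ε/2 := le_trans ht.2 (min_le_left _ _)
      have h2 : t ≤ t₁/2 := le_trans ht.2 (min_le_right _ _)
      exact hevball ⟨by
        rw [Metric.mem_ball, Real.dist_eq, sub_zero, abs_of_nonneg ht.1]; linarith,
        ht.1, by linarith [ht₁.2]⟩
    -- the first bad point
    set S : Set ℝ := Icc a t₁ ∩ (fun t => |y t| ^ p - M * |y (t - τ)| ^ q) ⁻¹' Iic 0 with hS_def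
    have hsub2 : Icc a t₁ ⊆ Ico 0 Tstar := fun x hx => ⟨le_trans ha_pos.le hx.1,
      lt_of_le_of_lt hx.2 ht₁.2⟩
    have hScl : IsClosed S :=
      (hFcont.mono hsub2).preimage_isClosed_of_isClosed isClosed_Icc isClosed_Iic
    have hSne : S.Nonempty := ⟨t₁, ⟨ha_lt_t₁.le, le_rfl⟩, hFt₁⟩
    have hSbdd : BddBelow S := ⟨a, fun x hx => hx.1.1⟩
    set t₀ : ℝ := sInf S with ht₀_def
    have ht₀S : t₀ ∈ S := hScl.csInf_mem hSne hSbdd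
    have ht₀pos : 0 < t₀ := lt_of_lt_of_le ha_pos ht₀S.1.1
    have ht₀T : t₀ < Tstar := lt_of_le_of_lt ht₀S.1.2 ht₁.2
    have hFt₀ : |y t₀| ^ p - M * |y (t₀ - τ)| ^ q ≤ 0 := ht₀S.2
    -- F > 0 strictly before t₀
    have hbefore : ∀ t, 0 < t → t < t₀ → 0 < |y t| ^ p - M * |y (t - τ)| ^ q := by
      intro t ht0 htt₀
      rcases le_or_gt t a with h | h
      · exact hsmall t ⟨ht0.le, h⟩
      · by_contra hneg
        push_neg at hneg
        have htS : t ∈ S := ⟨⟨h.le, le_trans htt₀.le ht₀S.1.2⟩, hneg⟩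
        exact absurd (csInf_le hSbdd htS) (not_le.mpr htt₀)
    -- y is strictly increasing on [0, t₀]
    have hmono : StrictMonoOn y (Icc 0 t₀) := by
      apply strictMonoOn_of_deriv_pos (convex_Icc _ _)
      · exact hycont.mono (fun x hx => ⟨by linarith [hx.1], lt_of_le_of_lt hx.2 ht₀T⟩)
      · intro x hx
        rw [interior_Icc] at hx
        rw [(hode x ⟨hx.1, lt_trans hx.2 ht₀T⟩).deriv]
        exact hbefore x hx.1 hx.2
    have hyt₀ : φ 0 < y t₀ := by
      have h := hmono ⟨le_rfl, ht₀pos.le⟩ ⟨ht₀pos.le, le_rfl⟩ ht₀pos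
      rwa [hy0] at h
    have hyt₀pos : 0 < y t₀ := lt_trans hφ0pos hyt₀
    have habs : |y t₀| = y t₀ := abs_of_pos hyt₀pos
    -- F t₀ = 0 by left-continuity
    have hFt₀0 : |y t₀| ^ p - M * |y (t₀ - τ)| ^ q = 0 := by
      refine le_antisymm hFt₀ ?_
      have hcw : ContinuousWithinAt (fun t => |y t| ^ p - M * |y (t - τ)| ^ q)
          (Ico 0 Tstar) t₀ := hFcont t₀ ⟨ht₀pos.le, ht₀T⟩
      have hmem : Ico (0:ℝ) Tstar ∈ 𝓝[<] t₀ :=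
        mem_of_superset (mem_nhdsWithin_of_mem_nhds (Ioo_mem_nhds ht₀pos ht₀T))
          Ioo_subset_Ico_self
      have htend : Tendsto (fun t => |y t| ^ p - M * |y (t - τ)| ^ q) (𝓝[<] t₀)
          (𝓝 (|y t₀| ^ p - M * |y (t₀ - τ)| ^ q)) :=
        hcw.tendsto.mono_left (nhdsWithin_le_of_mem hmem)
      refine ge_of_tendsto htend ?_
      filter_upwards [Ioo_mem_nhdsLT_of_mem (⟨ht₀pos, le_rfl⟩ : t₀ ∈ Ioc 0 t₀)] with x hx
      exact (hbefore x hx.1 hx.2).le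
    rcases le_or_gt t₀ τ with hcase | hcase
    · -- t₀ ≤ τ : the delayed point is in the history
      have hmem' : t₀ - τ ∈ Icc (-τ) (0:ℝ) := ⟨by linarith, by linarith⟩
      have hyH : y (t₀ - τ) = φ (t₀ - τ) := hic _ hmem'
      have h1 : y t₀ ^ p = M * |φ (t₀ - τ)| ^ q := by
        rw [← hyH, ← habs]; linarith
      have h2 := hA _ hmem'
      have h3 : φ 0 ^ p < y t₀ ^ p := Real.rpow_lt_rpow hφ0pos.le hyt₀ hppos
      linarith
    · -- τ < t₀ : the delayed point is in (0, t₀)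
      have hs0 : 0 < t₀ - τ := by linarith
      have hst₀ : t₀ - τ < t₀ := by linarith
      have hys : y 0 < y (t₀ - τ) :=
        hmono ⟨le_rfl, ht₀pos.le⟩ ⟨hs0.le, hst₀.le⟩ hs0
      have hyspos : 0 < y (t₀ - τ) := by rw [hy0] at hys; linarith
      have hyslt : y (t₀ - τ) < y t₀ :=
        hmono ⟨hs0.le, hst₀.le⟩ ⟨ht₀pos.le, le_rfl⟩ hst₀
      have habs' : |y (t₀ - τ)| = y (t₀ - τ) := abs_of_pos hyspos
      have h1 : y t₀ ^ p = M * y (t₀ - τ) ^ q := by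
        rw [← habs', ← habs]; linarith
      have h2 : M * y (t₀ - τ) ^ q < M * y t₀ ^ q :=
        mul_lt_mul_of_pos_left (Real.rpow_lt_rpow hyspos.le hyslt hq) hMpos
      have h3 : M ≤ y t₀ ^ (p - q) :=
        le_trans hMle (Real.rpow_le_rpow hφ0pos.le hyt₀.le (by linarith))
      have h4 : M * y t₀ ^ q ≤ y t₀ ^ (p - q) * y t₀ ^ q :=
        mul_le_mul_of_nonneg_right h3 (Real.rpow_nonneg hyt₀pos.le _)
      have h5 : y t₀ ^ (p - q) * y t₀ ^ q = y t₀ ^ p := by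
        rw [← Real.rpow_add hyt₀pos]; ring_nf
      linarith
  constructor
  · intro t ht
    rw [(hode t ht).deriv]
    exact hFpos t ht
  · apply strictMonoOn_of_deriv_pos (convex_Ico _ _)
    · exact hycont.mono hsub
    · intro x hx
      rw [interior_Ico] at hx
      rw [(hode x hx).deriv]
      exact hFpos x hx
end
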